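/- In the difference field extension setting, suppose η = (η_1, …, η_n) and ζ = (ζ_1, …, ζ_k) are two finite tuples of elements of L each of which generates L over K together with all their transforms τ^k η_i (respectively τ^k ζ_j). If Φ_η and Φ_ζ are quasi-polynomials with Φ_η(r) = trdeg_K L_r^η and Φ_ζ(r) = trdeg_K L_r^ζ for all sufficiently large r, then Φ_η and Φ_ζ have the same degree and the same leading coefficient (the coefficient of the top-degree term). -/
import Mathlib


/-- The weighted order of `k ∈ ℕ^m`: `ord_w k = w₁k₁ + ⋯ + w_m k_m`. -/
def ordw {m : ℕ} (w : Fin m → ℕ) (k : Fin m → ℕ) : ℕ := ∑ i, w i * k i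

/-- `τ^k = α₁^{k₁} ∘ ⋯ ∘ α_m^{k_m}` as a map `L → L`. -/
noncomputable def tauApp {L : Type*} [Field L] {m : ℕ}
    (α : Fin m → (L →+* L)) (k : Fin m → ℕ) : L → L :=
  (List.ofFn fun i => (⇑(α i))^[k i]).foldr (· ∘ ·) id

/-- `L_r^η`: the subfield of `L` generated by `K` and all `τ^k η_i` with `ord_w k ≤ r`. -/
noncomputable def diffSubfield {L : Type*} [Field L] {m n : ℕ}
    (K : Subfield L) (α : Fin m → (L →+* L)) (w : Fin m → ℕ)
    (η : Fin n → L) (r : ℕ) : Subfield L :=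
  Subfield.closure ((K : Set L) ∪
    {x | ∃ (k : Fin m → ℕ) (i : Fin n), ordw w k ≤ r ∧ x = tauApp α k (η i)})

/-- The transcendence degree over `K` of a subfield `S` of `L` containing `K`. -/
noncomputable def trdegNat {L : Type*} [Field L] (K S : Subfield L) : ℕ :=
  sSup {d : ℕ | ∃ b : Fin d → L, (∀ i, b i ∈ S) ∧ AlgebraicIndependent K b}


open Polynomial Filter

section Helpers

section PolyL
lemma evtl_nonneg_leadingCoeff (p : ℚ[X]) (N : ℕ)
    (h : ∀ n : ℕ, N ≤ n → 0 ≤ p.eval (n : ℚ)) : 0 ≤ p.leadingCoeff := by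
  by_contra hneg
  push_neg at hneg
  by_cases hdeg : p.degree ≤ 0
  · obtain ⟨a, rfl⟩ : ∃ a, p = C a := ⟨p.coeff 0, Polynomial.eq_C_of_degree_le_zero hdeg⟩
    have := h N le_rfl
    simp only [eval_C] at this
    simp only [leadingCoeff_C] at hneg
    linarith
  · push_neg at hdeg
    have htb := Polynomial.tendsto_atBot_of_leadingCoeff_nonpos p hdeg hneg.le
    have h1 : ∀ᶠ x : ℚ in atTop, p.eval x ≤ -1 := htb.eventually (eventually_le_atBot (-1))
    have h2 : ∀ᶠ n : ℕ in atTop, p.eval (n : ℚ) ≤ -1 :=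
      (tendsto_natCast_atTop_atTop (R := ℚ)).eventually h1
    obtain ⟨n, hn1, hn2⟩ := (h2.and (eventually_ge_atTop N)).exists
    have := h n hn2
    linarith

lemma natDegree_le_of_evtl (p q : ℚ[X]) (N : ℕ)
    (h0 : ∀ n : ℕ, N ≤ n → 0 ≤ p.eval (n : ℚ))
    (h : ∀ n : ℕ, N ≤ n → p.eval (n : ℚ) ≤ q.eval (n : ℚ)) :
    p.natDegree ≤ q.natDegree := by
  by_contra hlt
  push_neg at hlt
  have hp0 : p ≠ 0 := by
    intro h'
    rw [h'] at hlt
    simp at hlt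
  have hlcp : 0 < p.leadingCoeff :=
    lt_of_le_of_ne (evtl_nonneg_leadingCoeff p N h0)
      (Ne.symm (mt Polynomial.leadingCoeff_eq_zero.mp hp0))
  have hd : (q - p).natDegree = p.natDegree := by
    rw [← natDegree_neg (q - p), neg_sub]
    exact Polynomial.natDegree_sub_eq_left_of_natDegree_lt hlt
  have hlc : 0 ≤ (q - p).leadingCoeff :=
    evtl_nonneg_leadingCoeff _ N (fun n hn => by
      have := h n hn; simp only [eval_sub]; linarith)
  have hco : (q - p).coeff p.natDegree = q.coeff p.natDegree - p.coeff p.natDegree := by simp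
  have hqc : q.coeff p.natDegree = 0 := Polynomial.coeff_eq_zero_of_natDegree_lt hlt
  have : (q - p).leadingCoeff = - p.leadingCoeff := by
    rw [Polynomial.leadingCoeff, hd, hco, hqc, Polynomial.leadingCoeff]; ring
  rw [this] at hlc
  linarith

lemma coeff_le_of_evtl (p q : ℚ[X]) (D N : ℕ)
    (hp : p.natDegree ≤ D) (hq : q.natDegree ≤ D)
    (h : ∀ n : ℕ, N ≤ n → p.eval (n : ℚ) ≤ q.eval (n : ℚ)) :
    p.coeff D ≤ q.coeff D := by
  have key : 0 ≤ (q - p).coeff D := by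
    by_cases hz : (q - p).coeff D = 0
    · rw [hz]
    · have hDle : D ≤ (q - p).natDegree := Polynomial.le_natDegree_of_ne_zero hz
      have hle : (q - p).natDegree ≤ D := le_trans (Polynomial.natDegree_sub_le q p) (by omega)
      have hDeq : (q - p).natDegree = D := le_antisymm hle hDle
      have : (q - p).coeff D = (q - p).leadingCoeff := by rw [Polynomial.leadingCoeff, hDeq]
      rw [this]
      exact evtl_nonneg_leadingCoeff _ N (fun n hn => by
        have := h n hn; simp only [eval_sub]; linarith)
  have h2 : (q - p).coeff D = q.coeff D - p.coeff D := by simp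
  linarith [h2 ▸ key]

lemma natDegree_comp_affine (p : ℚ[X]) (a b : ℚ) (ha : a ≠ 0) :
    (p.comp (C a * X + C b)).natDegree = p.natDegree := by
  rw [natDegree_comp, natDegree_linear ha, mul_one]

lemma coeff_comp_affine (p : ℚ[X]) (a b : ℚ) (ha : a ≠ 0) (D : ℕ) (hD : p.natDegree ≤ D) :
    (p.comp (C a * X + C b)).coeff D = a ^ D * p.coeff D := by
  rcases lt_or_eq_of_le hD with hlt | heq
  · rw [Polynomial.coeff_eq_zero_of_natDegree_lt (by rw [natDegree_comp_affine p a b ha]; exact hlt),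
      Polynomial.coeff_eq_zero_of_natDegree_lt hlt, mul_zero]
  · by_cases hp : p = 0
    · simp [hp]
    · rcases Nat.eq_zero_or_pos D with hD0 | hDpos
      · subst hD0
        have : p = C (p.coeff 0) := Polynomial.eq_C_of_natDegree_eq_zero (by omega)
        rw [this]; simp
      · have h1 : (p.comp (C a * X + C b)).coeff D = (p.comp (C a * X + C b)).leadingCoeff := by
          rw [Polynomial.leadingCoeff, natDegree_comp_affine p a b ha, ← heq]
        rw [h1, Polynomial.leadingCoeff_comp (by rw [natDegree_linear ha]; omega),
          leadingCoeff_linear ha, Polynomial.leadingCoeff, ← heq]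
        ring

lemma coeff_comp_shift (p : ℚ[X]) (b : ℚ) (D : ℕ) (hD : p.natDegree ≤ D) :
    (p.comp (X + C b)).coeff D = p.coeff D := by
  have := coeff_comp_affine p 1 b one_ne_zero D hD
  simp only [map_one, one_mul, one_pow] at this
  exact this

lemma natDegree_comp_shift (p : ℚ[X]) (b : ℚ) :
    (p.comp (X + C b)).natDegree = p.natDegree := by
  have := natDegree_comp_affine p 1 b one_ne_zero
  simp only [map_one, one_mul] at this
  exact this
end PolyL

lemma quasi_main (q₁ q₂ : ℕ) (hq₁ : 0 < q₁) (hq₂ : 0 < q₂)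
    (g₁ : Fin q₁ → Polynomial ℚ) (g₂ : Fin q₂ → Polynomial ℚ) (f g : ℕ → ℕ)
    (hfm : Monotone f) (hgm : Monotone g) (s : ℕ)
    (hfg : ∀ r, f r ≤ g (r + s)) (hgf : ∀ r, g r ≤ f (r + s))
    (N : ℕ)
    (hf : ∀ r, N ≤ r → (f r : ℚ) = (g₁ ⟨r % q₁, Nat.mod_lt r hq₁⟩).eval (r : ℚ))
    (hg : ∀ r, N ≤ r → (g r : ℚ) = (g₂ ⟨r % q₂, Nat.mod_lt r hq₂⟩).eval (r : ℚ)) :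
    (Finset.univ.sup fun i => (g₁ i).natDegree)
        = (Finset.univ.sup fun j => (g₂ j).natDegree) ∧
    ∃ c : ℚ,
      (∀ i, (g₁ i).coeff (Finset.univ.sup fun i' => (g₁ i').natDegree) = c) ∧
      (∀ j, (g₂ j).coeff (Finset.univ.sup fun i' => (g₁ i').natDegree) = c) := by
  set Q : ℕ := q₁ * q₂ with hQdef
  have hQ : 0 < Q := Nat.mul_pos hq₁ hq₂
  have hQne : (Q : ℚ) ≠ 0 := by exact_mod_cast hQ.ne'
  set D : ℕ := Finset.univ.sup fun i => (g₁ i).natDegree with hDdef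
  set P₁ : ℕ → Polynomial ℚ := fun c =>
    (g₁ ⟨c % q₁, Nat.mod_lt c hq₁⟩).comp (C (Q : ℚ) * X + C (c : ℚ)) with hP₁def
  set P₂ : ℕ → Polynomial ℚ := fun c =>
    (g₂ ⟨c % q₂, Nat.mod_lt c hq₂⟩).comp (C (Q : ℚ) * X + C (c : ℚ)) with hP₂def
  have hmod₁ : ∀ t c : ℕ, (Q * t + c) % q₁ = c % q₁ := by
    intro t c
    have h1 : Q * t = q₁ * (q₂ * t) := by ring
    rw [h1, Nat.mul_add_mod]
  have hmod₂ : ∀ t c : ℕ, (Q * t + c) % q₂ = c % q₂ := by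
    intro t c
    have h1 : Q * t = q₂ * (q₁ * t) := by ring
    rw [h1, Nat.mul_add_mod]
  have hle : ∀ t c : ℕ, t ≤ Q * t + c := fun t c =>
    le_trans (Nat.le_mul_of_pos_left t hQ) (Nat.le_add_right _ _)
  -- evaluation facts
  have hP₁eval : ∀ c t : ℕ, N ≤ t → (f (Q * t + c) : ℚ) = (P₁ c).eval (t : ℚ) := by
    intro c t ht
    rw [hf (Q * t + c) (le_trans ht (hle t c))]
    have h1 : (⟨(Q * t + c) % q₁, Nat.mod_lt _ hq₁⟩ : Fin q₁)
        = ⟨c % q₁, Nat.mod_lt c hq₁⟩ := by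
      simp [Fin.mk.injEq, hmod₁]
    rw [h1, hP₁def]
    simp only [eval_comp, eval_add, eval_mul, eval_C, eval_X]
    push_cast
    ring_nf
  have hP₂eval : ∀ c t : ℕ, N ≤ t → (g (Q * t + c) : ℚ) = (P₂ c).eval (t : ℚ) := by
    intro c t ht
    rw [hg (Q * t + c) (le_trans ht (hle t c))]
    have h1 : (⟨(Q * t + c) % q₂, Nat.mod_lt _ hq₂⟩ : Fin q₂)
        = ⟨c % q₂, Nat.mod_lt c hq₂⟩ := by
      simp [Fin.mk.injEq, hmod₂]
    rw [h1, hP₂def]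
    simp only [eval_comp, eval_add, eval_mul, eval_C, eval_X]
    push_cast
    ring_nf
  -- nonnegativity
  have hpos₁ : ∀ c, ∀ t : ℕ, N ≤ t → 0 ≤ (P₁ c).eval (t : ℚ) := by
    intro c t ht
    rw [← hP₁eval c t ht]
    exact Nat.cast_nonneg _
  have hpos₂ : ∀ c, ∀ t : ℕ, N ≤ t → 0 ≤ (P₂ c).eval (t : ℚ) := by
    intro c t ht
    rw [← hP₂eval c t ht]
    exact Nat.cast_nonneg _
  -- monotonicity in c
  have hI2 : ∀ c c' : ℕ, c ≤ c' → ∀ t : ℕ, N ≤ t →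
      (P₁ c).eval (t : ℚ) ≤ (P₁ c').eval (t : ℚ) := by
    intro c c' hcc t ht
    rw [← hP₁eval c t ht, ← hP₁eval c' t ht]
    exact_mod_cast hfm (by omega)
  -- wrap-around
  have hI3 : ∀ c : ℕ, c ≤ Q → ∀ t : ℕ, N ≤ t →
      (P₁ c).eval (t : ℚ) ≤ ((P₁ 0).comp (X + C (1 : ℚ))).eval (t : ℚ) := by
    intro c hc t ht
    have hre : ((P₁ 0).comp (X + C (1 : ℚ))).eval (t : ℚ) = (P₁ 0).eval ((t + 1 : ℕ) : ℚ) := by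
      simp [eval_comp]
    rw [hre, ← hP₁eval 0 (t + 1) (by omega), ← hP₁eval c t ht]
    have : Q * t + c ≤ Q * (t + 1) + 0 := by
      have h1 : Q * (t + 1) = Q * t + Q := by ring
      omega
    exact_mod_cast hfm this
  -- cross comparisons
  have hI4 : ∀ c : ℕ, ∀ t : ℕ, N ≤ t →
      (P₁ c).eval (t : ℚ) ≤ ((P₂ c).comp (X + C ((s + 1 : ℕ) : ℚ))).eval (t : ℚ) := by
    intro c t ht
    have hre : ((P₂ c).comp (X + C ((s + 1 : ℕ) : ℚ))).eval (t : ℚ)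
        = (P₂ c).eval ((t + (s + 1) : ℕ) : ℚ) := by
      simp [eval_comp]
    rw [hre, ← hP₂eval c (t + (s + 1)) (by omega), ← hP₁eval c t ht]
    have h1 : f (Q * t + c) ≤ g (Q * t + c + s) := hfg _
    have h2 : g (Q * t + c + s) ≤ g (Q * (t + (s + 1)) + c) := by
      apply hgm
      have h3 : Q * (t + (s + 1)) = Q * t + Q * (s + 1) := by ring
      have h4 : s + 1 ≤ Q * (s + 1) := Nat.le_mul_of_pos_left _ hQ
      omega
    exact_mod_cast le_trans h1 h2
  have hI5 : ∀ c : ℕ, ∀ t : ℕ, N ≤ t →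
      (P₂ c).eval (t : ℚ) ≤ ((P₁ c).comp (X + C ((s + 1 : ℕ) : ℚ))).eval (t : ℚ) := by
    intro c t ht
    have hre : ((P₁ c).comp (X + C ((s + 1 : ℕ) : ℚ))).eval (t : ℚ)
        = (P₁ c).eval ((t + (s + 1) : ℕ) : ℚ) := by
      simp [eval_comp]
    rw [hre, ← hP₁eval c (t + (s + 1)) (by omega), ← hP₂eval c t ht]
    have h1 : g (Q * t + c) ≤ f (Q * t + c + s) := hgf _
    have h2 : f (Q * t + c + s) ≤ f (Q * (t + (s + 1)) + c) := by
      apply hfm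
      have h3 : Q * (t + (s + 1)) = Q * t + Q * (s + 1) := by ring
      have h4 : s + 1 ≤ Q * (s + 1) := Nat.le_mul_of_pos_left _ hQ
      omega
    exact_mod_cast le_trans h1 h2
  -- degrees
  have hdeg₁ : ∀ c : ℕ, (P₁ c).natDegree = (g₁ ⟨c % q₁, Nat.mod_lt c hq₁⟩).natDegree :=
    fun c => natDegree_comp_affine _ _ _ hQne
  have hdeg₂ : ∀ c : ℕ, (P₂ c).natDegree = (g₂ ⟨c % q₂, Nat.mod_lt c hq₂⟩).natDegree :=
    fun c => natDegree_comp_affine _ _ _ hQne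
  have hdegD : ∀ c : ℕ, (P₁ c).natDegree ≤ D := by
    intro c
    rw [hdeg₁ c]
    exact Finset.le_sup (f := fun i => (g₁ i).natDegree) (Finset.mem_univ _)
  have hd21 : ∀ c : ℕ, (P₂ c).natDegree ≤ (P₁ c).natDegree := by
    intro c
    have := natDegree_le_of_evtl (P₂ c) ((P₁ c).comp (X + C ((s + 1 : ℕ) : ℚ))) N
      (hpos₂ c) (hI5 c)
    rwa [natDegree_comp_shift] at this
  have hd12 : ∀ c : ℕ, (P₁ c).natDegree ≤ (P₂ c).natDegree := by
    intro c
    have := natDegree_le_of_evtl (P₁ c) ((P₂ c).comp (X + C ((s + 1 : ℕ) : ℚ))) N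
      (hpos₁ c) (hI4 c)
    rwa [natDegree_comp_shift] at this
  have hdeq : ∀ c : ℕ, (P₁ c).natDegree = (P₂ c).natDegree :=
    fun c => le_antisymm (hd12 c) (hd21 c)
  have hdegD₂ : ∀ c : ℕ, (P₂ c).natDegree ≤ D := fun c => (hdeq c) ▸ hdegD c
  -- coefficient equalities
  have hφeq : ∀ c : ℕ, c ≤ Q → (P₁ c).coeff D = (P₁ 0).coeff D := by
    intro c hc
    have le₁ : (P₁ 0).coeff D ≤ (P₁ c).coeff D :=
      coeff_le_of_evtl _ _ D N (hdegD 0) (hdegD c) (hI2 0 c (Nat.zero_le c))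
    have le₂ : (P₁ c).coeff D ≤ (P₁ 0).coeff D := by
      have h := coeff_le_of_evtl (P₁ c) ((P₁ 0).comp (X + C (1 : ℚ))) D N (hdegD c)
        (by rw [natDegree_comp_shift]; exact hdegD 0) (hI3 c hc)
      rwa [coeff_comp_shift _ _ _ (hdegD 0)] at h
    exact le_antisymm le₂ le₁
  have hψeq : ∀ c : ℕ, (P₂ c).coeff D = (P₁ c).coeff D := by
    intro c
    have le₁ : (P₁ c).coeff D ≤ (P₂ c).coeff D := by
      have h := coeff_le_of_evtl (P₁ c) ((P₂ c).comp (X + C ((s + 1 : ℕ) : ℚ))) D N (hdegD c)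
        (by rw [natDegree_comp_shift]; exact hdegD₂ c) (hI4 c)
      rwa [coeff_comp_shift _ _ _ (hdegD₂ c)] at h
    have le₂ : (P₂ c).coeff D ≤ (P₁ c).coeff D := by
      have h := coeff_le_of_evtl (P₂ c) ((P₁ c).comp (X + C ((s + 1 : ℕ) : ℚ))) D N (hdegD₂ c)
        (by rw [natDegree_comp_shift]; exact hdegD c) (hI5 c)
      rwa [coeff_comp_shift _ _ _ (hdegD c)] at h
    exact le_antisymm le₂ le₁
  -- affine coefficient extraction
  have hφ : ∀ c : ℕ, (P₁ c).coeff D = (Q : ℚ) ^ D * (g₁ ⟨c % q₁, Nat.mod_lt c hq₁⟩).coeff D :=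
    fun c => coeff_comp_affine _ _ _ hQne D (Finset.le_sup (f := fun i => (g₁ i).natDegree) (Finset.mem_univ _))
  have hψ : ∀ c : ℕ, (P₂ c).coeff D = (Q : ℚ) ^ D * (g₂ ⟨c % q₂, Nat.mod_lt c hq₂⟩).coeff D := by
    intro c
    apply coeff_comp_affine _ _ _ hQne D
    rw [← hdeg₂ c]
    exact hdegD₂ c
  have hQpow : (Q : ℚ) ^ D ≠ 0 := pow_ne_zero _ hQne
  have hq₁Q : q₁ ≤ Q := Nat.le_mul_of_pos_right q₁ hq₂
  have hq₂Q : q₂ ≤ Q := Nat.le_mul_of_pos_left q₂ hq₁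
  -- index normalizations
  have hmkfin₁ : ∀ i : Fin q₁, (⟨(i : ℕ) % q₁, Nat.mod_lt _ hq₁⟩ : Fin q₁) = i := by
    intro i
    simp [Nat.mod_eq_of_lt i.isLt]
  have hmkfin₂ : ∀ j : Fin q₂, (⟨(j : ℕ) % q₂, Nat.mod_lt _ hq₂⟩ : Fin q₂) = j := by
    intro j
    simp [Nat.mod_eq_of_lt j.isLt]
  have hcoef₁ : ∀ i : Fin q₁, (P₁ (i : ℕ)).coeff D = (Q : ℚ) ^ D * (g₁ i).coeff D := by
    intro i
    rw [hφ (i : ℕ), hmkfin₁ i]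
  have hcoef₂ : ∀ j : Fin q₂, (P₂ (j : ℕ)).coeff D = (Q : ℚ) ^ D * (g₂ j).coeff D := by
    intro j
    rw [hψ (j : ℕ), hmkfin₂ j]
  -- the common constant
  refine ⟨?_, (g₁ ⟨0, hq₁⟩).coeff D, ?_, ?_⟩
  · -- degree equality
    apply le_antisymm
    · apply Finset.sup_le
      intro i _
      have h1 : (g₁ i).natDegree = (P₁ (i : ℕ)).natDegree := by rw [hdeg₁, hmkfin₁ i]
      rw [h1, hdeq]
      rw [hdeg₂]
      exact Finset.le_sup (f := fun j => (g₂ j).natDegree) (Finset.mem_univ _)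
    · apply Finset.sup_le
      intro j _
      have h1 : (g₂ j).natDegree = (P₂ (j : ℕ)).natDegree := by rw [hdeg₂, hmkfin₂ j]
      rw [h1, ← hdeq, hdeg₁]
      exact Finset.le_sup (f := fun i => (g₁ i).natDegree) (Finset.mem_univ _)
  · intro i
    apply mul_left_cancel₀ hQpow
    have hc0 : (P₁ 0).coeff D = (Q : ℚ) ^ D * (g₁ ⟨0, hq₁⟩).coeff D := by
      have h0 : (⟨0 % q₁, Nat.mod_lt 0 hq₁⟩ : Fin q₁) = ⟨0, hq₁⟩ := by
        simp [Fin.mk.injEq]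
      rw [hφ 0, h0]
    rw [← hcoef₁ i, hφeq (i : ℕ) (le_trans (le_of_lt i.isLt) hq₁Q), hc0]
  · intro j
    apply mul_left_cancel₀ hQpow
    have hc0 : (P₁ 0).coeff D = (Q : ℚ) ^ D * (g₁ ⟨0, hq₁⟩).coeff D := by
      have h0 : (⟨0 % q₁, Nat.mod_lt 0 hq₁⟩ : Fin q₁) = ⟨0, hq₁⟩ := by
        simp [Fin.mk.injEq]
      rw [hφ 0, h0]
    rw [← hcoef₂ j, hψeq (j : ℕ), hφeq (j : ℕ) (le_trans (le_of_lt j.isLt) hq₂Q), hc0]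

noncomputable def tauHom {L : Type*} [Field L] {m : ℕ}
    (α : Fin m → (L →+* L)) (k : Fin m → ℕ) : L →+* L :=
  (List.ofFn fun i => (α i) ^ (k i)).prod

lemma tauHom_coe {L : Type*} [Field L] : ∀ {m : ℕ}
    (α : Fin m → (L →+* L)) (k : Fin m → ℕ), ⇑(tauHom α k) = tauApp α k := by
  intro m
  induction m with
  | zero => intro α k; simp [tauHom, tauApp, List.ofFn_zero]
  | succ m ih =>
    intro α k
    have h1 : tauHom α k = (α 0) ^ (k 0) * tauHom (fun i => α i.succ) (fun i => k i.succ) := by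
      simp [tauHom, List.ofFn_succ]
    have h2 : tauApp α k
        = (⇑(α 0))^[k 0] ∘ tauApp (fun i => α i.succ) (fun i => k i.succ) := by
      simp [tauApp, List.ofFn_succ, List.foldr_cons]
    rw [h2, ← ih]
    funext x
    simp [h1]

lemma ordw_add {m : ℕ} (w k t : Fin m → ℕ) : ordw w (k + t) = ordw w k + ordw w t := by
  simp [ordw, Pi.add_apply, Nat.mul_add, Finset.sum_add_distrib]

lemma tauHom_mul {L : Type*} [Field L] : ∀ {m : ℕ}
    (α : Fin m → (L →+* L)),
    (∀ i j, (α i).comp (α j) = (α j).comp (α i)) →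
    ∀ (k t : Fin m → ℕ), tauHom α (k + t) = tauHom α k * tauHom α t := by
  intro m
  induction m with
  | zero => intro α hcomm k t; simp [tauHom, List.ofFn_zero]
  | succ m ih =>
    intro α hcomm k t
    have hrec : ∀ (k' : Fin (m+1) → ℕ), tauHom α k'
        = (α 0) ^ (k' 0) * tauHom (fun i => α i.succ) (fun i => k' i.succ) := by
      intro k'; simp [tauHom, List.ofFn_succ]
    have hcomm' : ∀ i j, ((fun i => α (Fin.succ i)) i).comp ((fun i => α (Fin.succ i)) j)
        = ((fun i => α (Fin.succ i)) j).comp ((fun i => α (Fin.succ i)) i) :=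
      fun i j => hcomm _ _
    have hC : Commute ((α 0) ^ (t 0)) (tauHom (fun i => α i.succ) (fun i => k i.succ)) := by
      apply Commute.list_prod_right
      intro b hb
      simp only [List.mem_ofFn] at hb
      obtain ⟨i, rfl⟩ := hb
      exact (Commute.pow_pow (show Commute (α 0) (α i.succ) from hcomm 0 i.succ) _ _)
    rw [hrec (k + t), hrec k, hrec t]
    have h0 : (k + t) 0 = k 0 + t 0 := rfl
    have h1 : (fun i : Fin m => (k + t) i.succ)
        = (fun i => k i.succ) + (fun i => t i.succ) := rfl
    rw [h0, h1, ih _ hcomm', pow_add]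
    exact hC.mul_mul_mul_comm _ _

lemma tauHom_mem_K {L : Type*} [Field L] : ∀ {m : ℕ}
    (α : Fin m → (L →+* L)) (K : Subfield L),
    (∀ i, ∀ x ∈ K, α i x ∈ K) → ∀ (k : Fin m → ℕ) (x : L), x ∈ K → tauHom α k x ∈ K := by
  intro m
  induction m with
  | zero =>
    intro α K hK k x hx
    simpa [tauHom, List.ofFn_zero] using hx
  | succ m ih =>
    intro α K hK k x hx
    have hrec : tauHom α k
        = (α 0) ^ (k 0) * tauHom (fun i => α i.succ) (fun i => k i.succ) := by
      simp [tauHom, List.ofFn_succ]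
    rw [hrec]
    have h1 : tauHom (fun i => α i.succ) (fun i => k i.succ) x ∈ K :=
      ih _ K (fun i => hK i.succ) _ x hx
    have h2 : ∀ (j : ℕ) (y : L), y ∈ K → ((α 0) ^ j) y ∈ K := by
      intro j
      induction j with
      | zero => intro y hy; simpa using hy
      | succ j ihj =>
        intro y hy
        rw [pow_succ']
        simpa using hK 0 _ (ihj y hy)
    exact h2 _ _ h1

lemma diffSubfield_mono {L : Type*} [Field L] {m n : ℕ}
    (K : Subfield L) (α : Fin m → (L →+* L)) (w : Fin m → ℕ)
    (η : Fin n → L) {r r' : ℕ} (h : r ≤ r') :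
    diffSubfield K α w η r ≤ diffSubfield K α w η r' := by
  apply Subfield.closure_mono
  apply Set.union_subset_union_right
  rintro x ⟨k, i, hk, rfl⟩
  exact ⟨k, i, le_trans hk h, rfl⟩

lemma tau_maps {L : Type*} [Field L] {m n : ℕ}
    (K : Subfield L) (α : Fin m → (L →+* L))
    (hcomm : ∀ i j, (α i).comp (α j) = (α j).comp (α i))
    (hK : ∀ i, ∀ x ∈ K, α i x ∈ K)
    (w : Fin m → ℕ) (ζ : Fin n → L) (r : ℕ) (k : Fin m → ℕ) (x : L)
    (hx : x ∈ diffSubfield K α w ζ r) :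
    tauApp α k x ∈ diffSubfield K α w ζ (r + ordw w k) := by
  rw [← tauHom_coe]
  have hle : diffSubfield K α w ζ r
      ≤ (diffSubfield K α w ζ (r + ordw w k)).comap (tauHom α k) := by
    apply Subfield.closure_le.2
    rintro y (hy | ⟨t, i, ht, rfl⟩)
    · apply Subfield.mem_comap.2
      apply Subfield.subset_closure
      exact Or.inl (tauHom_mem_K α K hK k y hy)
    · apply Subfield.mem_comap.2
      apply Subfield.subset_closure
      refine Or.inr ⟨k + t, i, ?_, ?_⟩
      · rw [ordw_add]
        omega
      · show tauHom α k (tauApp α t (ζ i)) = tauApp α (k + t) (ζ i)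
        rw [← tauHom_coe, ← tauHom_coe, tauHom_mul α hcomm k t]
        rfl
  exact Subfield.mem_comap.1 (hle hx)

lemma exists_shift {L : Type*} [Field L] {m n nz : ℕ}
    (K : Subfield L) (α : Fin m → (L →+* L))
    (hcomm : ∀ i j, (α i).comp (α j) = (α j).comp (α i))
    (hK : ∀ i, ∀ x ∈ K, α i x ∈ K)
    (w : Fin m → ℕ) (η : Fin n → L) (ζ : Fin nz → L)
    (hgenζ : Subfield.closure ((K : Set L) ∪
      {x | ∃ (t : Fin m → ℕ) (j : Fin nz), x = tauApp α t (ζ j)}) = ⊤) :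
    ∃ s : ℕ, ∀ r : ℕ, diffSubfield K α w η r ≤ diffSubfield K α w ζ (r + s) := by
  have hdir : Directed (· ≤ ·) (fun r => diffSubfield K α w ζ r) :=
    (fun r r' => ⟨max r r', diffSubfield_mono K α w ζ (le_max_left _ _),
      diffSubfield_mono K α w ζ (le_max_right _ _)⟩)
  have htop : ∀ x : L, x ∈ ⨆ r, diffSubfield K α w ζ r := by
    intro x
    have h1 : Subfield.closure ((K : Set L) ∪
        {x | ∃ (t : Fin m → ℕ) (j : Fin nz), x = tauApp α t (ζ j)})
        ≤ ⨆ r, diffSubfield K α w ζ r := by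
      apply Subfield.closure_le.2
      rintro y (hy | ⟨t, j, rfl⟩)
      · exact SetLike.le_def.1 (le_iSup (fun r => diffSubfield K α w ζ r) 0)
          (Subfield.subset_closure (Or.inl hy))
      · exact SetLike.le_def.1 (le_iSup (fun r => diffSubfield K α w ζ r) (ordw w t))
          (Subfield.subset_closure (Or.inr ⟨t, j, le_rfl, rfl⟩))
    exact h1 (hgenζ ▸ Subfield.mem_top x)
  have hmem : ∀ i : Fin n, ∃ s : ℕ, η i ∈ diffSubfield K α w ζ s := by
    intro i
    exact (Subfield.mem_iSup_of_directed hdir).1 (htop (η i))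
  choose s₀ hs₀ using hmem
  refine ⟨Finset.univ.sup s₀, ?_⟩
  intro r
  apply Subfield.closure_le.2
  rintro y (hy | ⟨k, i, hk, rfl⟩)
  · exact Subfield.subset_closure (Or.inl hy)
  · have h1 : η i ∈ diffSubfield K α w ζ (Finset.univ.sup s₀) :=
      SetLike.le_def.1 (diffSubfield_mono K α w ζ (Finset.le_sup (Finset.mem_univ i))) (hs₀ i)
    have h2 := tau_maps K α hcomm hK w ζ (Finset.univ.sup s₀) k (η i) h1
    have h3 : Finset.univ.sup s₀ + ordw w k ≤ r + Finset.univ.sup s₀ := by omega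
    exact SetLike.le_def.1 (diffSubfield_mono K α w ζ h3) h2


lemma Aset_subset {L : Type*} [Field L] (K : Subfield L) {S T : Subfield L} (h : S ≤ T) :
    {d : ℕ | ∃ b : Fin d → L, (∀ i, b i ∈ S) ∧ AlgebraicIndependent K b}
      ⊆ {d : ℕ | ∃ b : Fin d → L, (∀ i, b i ∈ T) ∧ AlgebraicIndependent K b} := by
  rintro d ⟨b, hb, hbi⟩
  exact ⟨b, fun i => h (hb i), hbi⟩

lemma zero_mem_Aset {L : Type*} [Field L] (K S : Subfield L) :
    0 ∈ {d : ℕ | ∃ b : Fin d → L, (∀ i, b i ∈ S) ∧ AlgebraicIndependent K b} :=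
  ⟨Fin.elim0, fun i => i.elim0, algebraicIndependent_empty_type⟩

lemma trdegNat_mono {L : Type*} [Field L] (K : Subfield L) {S T : Subfield L} (h : S ≤ T)
    (hT : BddAbove {d : ℕ | ∃ b : Fin d → L, (∀ i, b i ∈ T) ∧ AlgebraicIndependent K b}) :
    trdegNat K S ≤ trdegNat K T :=
  csSup_le_csSup hT ⟨0, zero_mem_Aset K S⟩ (Aset_subset K h)

lemma trdegNat_eq_zero {L : Type*} [Field L] (K S : Subfield L)
    (h : ¬ BddAbove {d : ℕ | ∃ b : Fin d → L, (∀ i, b i ∈ S) ∧ AlgebraicIndependent K b}) :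
    trdegNat K S = 0 := by
  unfold trdegNat
  rw [csSup_of_not_bddAbove h]
  exact csSup_empty

lemma poly_eq_zero_of_res (q : ℕ) (hq : 0 < q) (p : Polynomial ℚ) (i R : ℕ)
    (h : ∀ r : ℕ, R ≤ r → r % q = i % q → p.eval (r : ℚ) = 0) : p = 0 := by
  apply Polynomial.eq_zero_of_infinite_isRoot
  refine Set.infinite_of_injective_forall_mem
    (f := fun t : ℕ => (((R + t) * q + i % q : ℕ) : ℚ)) ?_ ?_
  · intro a b hab
    simp only at hab
    have h1 : (R + a) * q + i % q = (R + b) * q + i % q := by exact_mod_cast hab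
    have h2 : (R + a) * q = (R + b) * q := by omega
    have := Nat.eq_of_mul_eq_mul_right hq h2
    omega
  · intro t
    show Polynomial.IsRoot p _
    apply h
    · calc R ≤ R + t := Nat.le_add_right _ _
        _ ≤ (R + t) * q := Nat.le_mul_of_pos_right _ hq
        _ ≤ _ := Nat.le_add_right _ _
    · rw [mul_comm, Nat.mul_add_mod]
      exact Nat.mod_mod_of_dvd i (dvd_refl q)

end Helpers

/-- If `η` and `ζ` are two tuples of difference generators of `L/K` and `Φ_η`, `Φ_ζ`
are quasi-polynomials eventually equal to `trdeg_K L_r^η` resp. `trdeg_K L_r^ζ`, then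
`Φ_η` and `Φ_ζ` have the same degree and the same leading coefficient. -/
theorem difference_dimension_quasipolynomial_invariants
    {L : Type*} [Field L] [CharZero L] (K : Subfield L)
    (m n k : ℕ) (hm : 0 < m) (α : Fin m → (L →+* L))
    (hcomm : ∀ i j, (α i).comp (α j) = (α j).comp (α i))
    (hinj : ∀ i, Function.Injective (α i))
    (hK : ∀ i, ∀ x ∈ K, α i x ∈ K)
    (w : Fin m → ℕ) (hw : ∀ i, 0 < w i)
    (η : Fin n → L) (ζ : Fin k → L)
    (hgenη : Subfield.closure ((K : Set L) ∪
      {x | ∃ (t : Fin m → ℕ) (i : Fin n), x = tauApp α t (η i)}) = ⊤)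
    (hgenζ : Subfield.closure ((K : Set L) ∪
      {x | ∃ (t : Fin m → ℕ) (j : Fin k), x = tauApp α t (ζ j)}) = ⊤)
    (q₁ q₂ : ℕ) (hq₁ : 0 < q₁) (hq₂ : 0 < q₂)
    (g₁ : Fin q₁ → Polynomial ℚ) (g₂ : Fin q₂ → Polynomial ℚ)
    (N₁ : ℕ)
    (hΦη : ∀ r : ℕ, N₁ ≤ r →
      (trdegNat K (diffSubfield K α w η r) : ℚ)
        = (g₁ ⟨r % q₁, Nat.mod_lt r hq₁⟩).eval (r : ℚ))
    (N₂ : ℕ)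
    (hΦζ : ∀ r : ℕ, N₂ ≤ r →
      (trdegNat K (diffSubfield K α w ζ r) : ℚ)
        = (g₂ ⟨r % q₂, Nat.mod_lt r hq₂⟩).eval (r : ℚ)) :
    (Finset.univ.sup fun i => (g₁ i).natDegree)
        = (Finset.univ.sup fun j => (g₂ j).natDegree) ∧
    ∃ c : ℚ,
      (∀ i, (g₁ i).coeff (Finset.univ.sup fun i' => (g₁ i').natDegree) = c) ∧
      (∀ j, (g₂ j).coeff (Finset.univ.sup fun i' => (g₁ i').natDegree) = c) := by
  classical
  obtain ⟨s₁, hs₁⟩ := exists_shift K α hcomm hK w η ζ hgenζ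
  obtain ⟨s₂, hs₂⟩ := exists_shift K α hcomm hK w ζ η hgenη
  set s : ℕ := max s₁ s₂ with hs
  have hηζ : ∀ r, diffSubfield K α w η r ≤ diffSubfield K α w ζ (r + s) :=
    fun r => le_trans (hs₁ r) (diffSubfield_mono K α w ζ (by omega))
  have hζη : ∀ r, diffSubfield K α w ζ r ≤ diffSubfield K α w η (r + s) :=
    fun r => le_trans (hs₂ r) (diffSubfield_mono K α w η (by omega))
  by_cases hbdd : ∀ r : ℕ,
      BddAbove {d : ℕ | ∃ b : Fin d → L,
        (∀ i, b i ∈ diffSubfield K α w η r) ∧ AlgebraicIndependent K b} ∧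
      BddAbove {d : ℕ | ∃ b : Fin d → L,
        (∀ i, b i ∈ diffSubfield K α w ζ r) ∧ AlgebraicIndependent K b}
  · exact quasi_main q₁ q₂ hq₁ hq₂ g₁ g₂
      (fun r => trdegNat K (diffSubfield K α w η r))
      (fun r => trdegNat K (diffSubfield K α w ζ r))
      (fun r r' h => trdegNat_mono K (diffSubfield_mono K α w η h) (hbdd r').1)
      (fun r r' h => trdegNat_mono K (diffSubfield_mono K α w ζ h) (hbdd r').2)
      s (fun r => trdegNat_mono K (hηζ r) (hbdd (r + s)).2)
      (fun r => trdegNat_mono K (hζη r) (hbdd (r + s)).1)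
      (max N₁ N₂) (fun r hr => hΦη r (by omega)) (fun r hr => hΦζ r (by omega))
  · rw [not_forall] at hbdd
    obtain ⟨r₀, hr₀⟩ := hbdd
    rw [not_and_or] at hr₀
    have hkey : ∀ r, r₀ + s ≤ r →
        trdegNat K (diffSubfield K α w η r) = 0 ∧
        trdegNat K (diffSubfield K α w ζ r) = 0 := by
      intro r hr
      rcases hr₀ with hA | hB
      · refine ⟨trdegNat_eq_zero _ _ (fun hb => hA ?_), trdegNat_eq_zero _ _ (fun hb => hA ?_)⟩
        · exact hb.mono (Aset_subset K (diffSubfield_mono K α w η (by omega)))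
        · exact hb.mono (Aset_subset K
            (le_trans (hηζ r₀) (diffSubfield_mono K α w ζ (by omega))))
      · refine ⟨trdegNat_eq_zero _ _ (fun hb => hB ?_), trdegNat_eq_zero _ _ (fun hb => hB ?_)⟩
        · exact hb.mono (Aset_subset K
            (le_trans (hζη r₀) (diffSubfield_mono K α w η (by omega))))
        · exact hb.mono (Aset_subset K (diffSubfield_mono K α w ζ (by omega)))
    have hz₁ : ∀ i : Fin q₁, g₁ i = 0 := by
      intro i
      apply poly_eq_zero_of_res q₁ hq₁ (g₁ i) i.val (max (r₀ + s) N₁)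
      intro r hr hmod
      have h1 := hΦη r (le_trans (le_max_right _ _) hr)
      have h2 := (hkey r (le_trans (le_max_left _ _) hr)).1
      rw [h2] at h1
      have h3 : (⟨r % q₁, Nat.mod_lt r hq₁⟩ : Fin q₁) = i := by
        have h4 : r % q₁ = i.val := by rw [hmod, Nat.mod_eq_of_lt i.isLt]
        simp [Fin.ext_iff, h4]
      rw [h3] at h1
      simpa using h1.symm
    have hz₂ : ∀ j : Fin q₂, g₂ j = 0 := by
      intro j
      apply poly_eq_zero_of_res q₂ hq₂ (g₂ j) j.val (max (r₀ + s) N₂)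
      intro r hr hmod
      have h1 := hΦζ r (le_trans (le_max_right _ _) hr)
      have h2 := (hkey r (le_trans (le_max_left _ _) hr)).2
      rw [h2] at h1
      have h3 : (⟨r % q₂, Nat.mod_lt r hq₂⟩ : Fin q₂) = j := by
        have h4 : r % q₂ = j.val := by rw [hmod, Nat.mod_eq_of_lt j.isLt]
        simp [Fin.ext_iff, h4]
      rw [h3] at h1
      simpa using h1.symm
    have hsup1 : (Finset.univ.sup fun i => (g₁ i).natDegree) = 0 :=
      Nat.le_zero.1 (Finset.sup_le fun i _ => by rw [hz₁ i]; simp)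
    have hsup2 : (Finset.univ.sup fun j => (g₂ j).natDegree) = 0 :=
      Nat.le_zero.1 (Finset.sup_le fun j _ => by rw [hz₂ j]; simp)
    refine ⟨by rw [hsup1, hsup2], 0, ?_, ?_⟩
    · intro i; rw [hz₁ i]; simp
    · intro j; rw [hz₂ j]; simp
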